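/- If I_k = {(m,n), (m+1,n-1)} contains two pairs, then I_{k-1} = {(m,n-1)} and I_{k+1} = {(m+1,n)}. -/
import Mathlib

/-- The set `I_k = {(m,n) : m+n+1 = k, -1/e ≤ m/e - n/d ≤ 1/d, 0 ≤ m < e, 0 ≤ n < d}`. -/
def Ik (d e : ℕ) (k : ℤ) : Set (ℤ × ℤ) :=
  {q | q.1 + q.2 + 1 = k ∧
    -(1 : ℚ) / e ≤ (q.1 : ℚ) / e - (q.2 : ℚ) / d ∧
    (q.1 : ℚ) / e - (q.2 : ℚ) / d ≤ 1 / d ∧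
    0 ≤ q.1 ∧ q.1 < e ∧ 0 ≤ q.2 ∧ q.2 < d}

lemma mem_Ik (d e : ℕ) (hd : 0 < d) (he : 0 < e) (k : ℤ) (q : ℤ × ℤ) :
    q ∈ Ik d e k ↔ q.1 + q.2 + 1 = k ∧ -(d:ℤ) ≤ d*q.1 - e*q.2 ∧ (d:ℤ)*q.1 - e*q.2 ≤ e ∧
      0 ≤ q.1 ∧ q.1 < e ∧ 0 ≤ q.2 ∧ q.2 < d := by
  have hd' : (0:ℚ) < d := by exact_mod_cast hd
  have he' : (0:ℚ) < e := by exact_mod_cast he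
  simp only [Ik, Set.mem_setOf_eq]
  have e1 : (-(1:ℚ)/e) = ((-(d:ℤ) : ℤ) : ℚ)/(e*d) := by push_cast; field_simp
  have e2 : ((q.1:ℚ)/e - q.2/d) = (((d:ℤ)*q.1 - e*q.2 : ℤ) : ℚ)/(e*d) := by
    push_cast; field_simp
  have e3 : ((1:ℚ)/d) = (((e:ℤ) : ℤ) : ℚ)/(e*d) := by push_cast; field_simp
  rw [e1, e2, e3, div_le_div_iff_of_pos_right (mul_pos he' hd'),
    div_le_div_iff_of_pos_right (mul_pos he' hd'), Int.cast_le, Int.cast_le]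

lemma tzero (t s : ℤ) (hs : 0 < s) (h1 : -s < t*s) (h2 : t*s < s) : t = 0 := by
  by_contra h
  rcases lt_or_gt_of_ne h with hlt | hgt
  · have ht : t ≤ -1 := by omega
    nlinarith
  · have ht : 1 ≤ t := by omega
    nlinarith

/-- If `I_k = {(m,n), (m+1,n-1)}` contains two pairs, then
`I_{k-1} = {(m,n-1)}` and `I_{k+1} = {(m+1,n)}`. -/
theorem stmt3 (d e : ℕ) (hd : 0 < d) (he : 0 < e) (k : ℤ)
    (hk1 : 2 ≤ k) (hk2 : k ≤ (d : ℤ) + e - 2) (m n : ℤ)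
    (hI : Ik d e k = {(m, n), (m + 1, n - 1)}) :
    Ik d e (k - 1) = {(m, n - 1)} ∧ Ik d e (k + 1) = {(m + 1, n)} := by
  have hdz : (0:ℤ) < d := by exact_mod_cast hd
  have hez : (0:ℤ) < e := by exact_mod_cast he
  have hmem1 : ((m, n) : ℤ × ℤ) ∈ Ik d e k := by rw [hI]; left; rfl
  have hmem2 : ((m + 1, n - 1) : ℤ × ℤ) ∈ Ik d e k := by rw [hI]; right; rfl
  rw [mem_Ik d e hd he] at hmem1 hmem2
  obtain ⟨h1, h2, h3, h4, h5, h6, h7⟩ := hmem1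
  obtain ⟨g1, g2, g3, g4, g5, g6, g7⟩ := hmem2
  simp only at h1 h2 h3 h4 h5 h6 h7 g1 g2 g3 g4 g5 g6 g7
  have key : (d:ℤ)*m - e*n = -d := by
    have hr : (d:ℤ)*(m+1) - e*(n-1) = d*m - e*n + d + e := by ring
    rw [hr] at g2 g3
    linarith
  constructor
  · ext ⟨a, b⟩
    rw [mem_Ik d e hd he, Set.mem_singleton_iff, Prod.mk.injEq]
    simp only
    constructor
    · rintro ⟨f1, f2, f3, f4, f5, f6, f7⟩
      have hab : (d:ℤ)*a - e*b = -d + e + (a - m)*(d + e) := by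
        have hb : b = n - 1 - (a - m) := by omega
        rw [hb]; linear_combination key
      have ht : a - m = 0 := by
        apply tzero (a - m) (d + e) (by linarith)
        · rw [hab] at f2; linarith
        · rw [hab] at f3; linarith
      constructor <;> omega
    · rintro ⟨rfl, rfl⟩
      refine ⟨by omega, ?_, ?_, h4, h5, by omega, by omega⟩
      · linarith [key]
      · linarith [key]
  · ext ⟨a, b⟩
    rw [mem_Ik d e hd he, Set.mem_singleton_iff, Prod.mk.injEq]
    simp only
    constructor
    · rintro ⟨f1, f2, f3, f4, f5, f6, f7⟩
      have hab : (d:ℤ)*a - e*b = (a - (m+1))*(d + e) := by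
        have hb : b = n - (a - (m+1)) := by omega
        rw [hb]; linear_combination key
      have ht : a - (m+1) = 0 := by
        apply tzero (a - (m+1)) (d + e) (by linarith)
        · rw [hab] at f2; linarith
        · rw [hab] at f3; linarith
      constructor <;> omega
    · rintro ⟨rfl, rfl⟩
      refine ⟨by omega, ?_, ?_, by omega, g5, h6, h7⟩
      · linarith [key]
      · linarith [key]
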